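/- arXiv:2407.14089 — 2 statements merged into one kernel-verified Lean document; each statement's English description precedes it below -/
import Mathlib

section
/- Let F₁ : ℝ → [0,∞] be a proper, lower semicontinuous, convex function with F₁(0) = 0 and lim_{|r|→∞} F₁(r)/r² = +∞, and let F₂ : ℝ → ℝ be differentiable with Lipschitz continuous derivative. For ε > 0 define the Moreau–Yosida approximation F₁,ε(r) := inf_{s∈ℝ} ( (1/(2ε))·(r−s)² + F₁(s) ). Then there exist ε⋆ ∈ (0,1) and a constant C ≥ 0 such that for all ε ∈ (0, ε⋆) and all s ∈ ℝ: F₁,ε(s) + F₂(s) ≥ s² − C. -/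
open Set ENNReal ContinuousLinearMap

lemma taylor_bound_aux (F₂ : ℝ → ℝ) (hF₂ : Differentiable ℝ F₂) (L : NNReal)
    (hLip : LipschitzWith L (deriv F₂)) (y : ℝ) :
    |F₂ y - F₂ 0 - deriv F₂ 0 * y| ≤ L * y ^ 2 := by
  have key := Convex.norm_image_sub_le_of_norm_fderiv_le'
    (f := F₂) (φ := smulRight (1 : ℝ →L[ℝ] ℝ) (deriv F₂ 0)) (C := (L : ℝ) * |y|)
    (s := uIcc (0:ℝ) y) (𝕜 := ℝ) (x := (0:ℝ)) (y := y)
    (fun x _ => hF₂ x)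
    (fun x hx => by
      rw [← toSpanSingleton_deriv, ← smulRight_one_eq_toSpanSingleton]
      have heq : smulRight (1 : ℝ →L[ℝ] ℝ) (deriv F₂ x)
            - smulRight (1 : ℝ →L[ℝ] ℝ) (deriv F₂ 0)
          = smulRight (1 : ℝ →L[ℝ] ℝ) (deriv F₂ x - deriv F₂ 0) := by
        ext; simp [sub_smul, smul_sub]
      rw [heq, norm_smulRight_apply, norm_one, one_mul]
      have h1 : ‖deriv F₂ x - deriv F₂ 0‖ ≤ (L : ℝ) * ‖x - 0‖ := by
        simpa [dist_eq_norm] using hLip.dist_le_mul x 0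
      have h2 : |x| ≤ |y| := by
        rcases le_total 0 y with h | h
        · rw [uIcc_of_le (by linarith)] at hx
          rw [abs_of_nonneg hx.1, abs_of_nonneg h]; exact hx.2
        · rw [uIcc_of_ge (by linarith)] at hx
          rw [abs_of_nonpos hx.2, abs_of_nonpos h]; linarith [hx.1]
      calc ‖deriv F₂ x - deriv F₂ 0‖ ≤ (L:ℝ) * ‖x - 0‖ := h1
        _ = (L:ℝ) * |x| := by simp
        _ ≤ (L:ℝ) * |y| := by nlinarith [L.coe_nonneg])
    (convex_uIcc 0 y) left_mem_uIcc right_mem_uIcc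
  have heval : smulRight (1 : ℝ →L[ℝ] ℝ) (deriv F₂ 0) (y - 0) = deriv F₂ 0 * y := by
    simp [mul_comm]
  rw [heval] at key
  calc |F₂ y - F₂ 0 - deriv F₂ 0 * y| ≤ (L:ℝ) * |y| * ‖y - (0:ℝ)‖ := key
    _ = L * y ^ 2 := by
        rw [sub_zero, Real.norm_eq_abs, mul_assoc, ← abs_mul, ← sq, abs_sq]

/-- Let `F₁ : ℝ → [0,∞]` be proper, lower semicontinuous and convex
with `F₁ 0 = 0` and superquadratic growth `F₁(r)/r² → ∞` as `|r| → ∞`, and let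
`F₂ : ℝ → ℝ` be differentiable with Lipschitz continuous derivative. Then there exist
`ε⋆ ∈ (0,1)` and `C ≥ 0` such that for all `ε ∈ (0,ε⋆)` and all `s`:
`F₁ε ε s + F₂ s ≥ s² - C`, where `F₁ε` is the Moreau–Yosida approximation of `F₁`. -/
theorem moreau_yosida_uniform_coercivity
    (F₁ : ℝ → ℝ≥0∞)
    (hproper : ∃ r : ℝ, F₁ r ≠ ⊤)
    (hlsc : LowerSemicontinuous F₁)
    (hconv : ∀ x y a b : ℝ, 0 ≤ a → 0 ≤ b → a + b = 1 →
      F₁ (a * x + b * y) ≤ ENNReal.ofReal a * F₁ x + ENNReal.ofReal b * F₁ y)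
    (hzero : F₁ 0 = 0)
    (hgrowth : ∀ M : ℝ, ∃ R : ℝ, ∀ r : ℝ, R ≤ |r| →
      ENNReal.ofReal (M * r ^ 2) ≤ F₁ r)
    (F₂ : ℝ → ℝ) (hF₂ : Differentiable ℝ F₂)
    (L : NNReal) (hLip : LipschitzWith L (deriv F₂))
    (F₁ε : ℝ → ℝ → ℝ≥0∞)
    (hF₁ε : ∀ ε r : ℝ, F₁ε ε r =
      ⨅ s : ℝ, ENNReal.ofReal (1 / (2 * ε) * (r - s) ^ 2) + F₁ s) :
    ∃ εstar ∈ Ioo (0 : ℝ) 1, ∃ C : ℝ, 0 ≤ C ∧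
      ∀ ε ∈ Ioo (0 : ℝ) εstar, ∀ s : ℝ,
        s ^ 2 - C ≤ (F₁ε ε s).toReal + F₂ s := by
  obtain ⟨r₀, hr₀⟩ := hproper
  set d : ℝ := deriv F₂ 0 with hd
  set Lr : ℝ := (L : ℝ) with hLr
  have hLr0 : 0 ≤ Lr := L.coe_nonneg
  set M : ℝ := 4 + 2 * Lr with hM
  have hM0 : 0 < M := by positivity
  obtain ⟨R, hR⟩ := hgrowth M
  refine ⟨min (1/2) (1/(2*M)), ⟨by positivity, lt_of_le_of_lt (min_le_left _ _) (by norm_num)⟩,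
    M * R ^ 2 + |F₂ 0| + d ^ 2 / 4, by positivity, ?_⟩
  intro ε hε r
  have hε0 : 0 < ε := hε.1
  have hMε : M ≤ 1 / (2 * ε) := by
    have h1 : ε < 1 / (2 * M) := lt_of_lt_of_le hε.2 (min_le_right _ _)
    rw [lt_div_iff₀ (by positivity)] at h1
    rw [le_div_iff₀ (by positivity)]
    nlinarith
  -- lower bound for the Moreau–Yosida regularization
  have key : ENNReal.ofReal (M * r ^ 2 / 2 - M * R ^ 2) ≤ F₁ε ε r := by
    rw [hF₁ε]
    refine le_iInf fun s => ?_
    by_cases hs : R ≤ |s|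
    · calc ENNReal.ofReal (M * r ^ 2 / 2 - M * R ^ 2)
          ≤ ENNReal.ofReal (M * (r - s) ^ 2) + ENNReal.ofReal (M * s ^ 2) := by
            rw [← ENNReal.ofReal_add (by positivity) (by positivity)]
            refine ENNReal.ofReal_le_ofReal ?_
            nlinarith [sq_nonneg (r - 2 * s), sq_nonneg R]
        _ ≤ ENNReal.ofReal (1 / (2 * ε) * (r - s) ^ 2) + F₁ s := by
            refine add_le_add (ENNReal.ofReal_le_ofReal ?_) (hR s hs)
            nlinarith [sq_nonneg (r - s)]
    · push_neg at hs
      have hs2 : s ^ 2 ≤ R ^ 2 := by nlinarith [abs_nonneg s, sq_abs s]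
      calc ENNReal.ofReal (M * r ^ 2 / 2 - M * R ^ 2)
          ≤ ENNReal.ofReal (1 / (2 * ε) * (r - s) ^ 2) := by
            refine ENNReal.ofReal_le_ofReal ?_
            nlinarith [sq_nonneg (r - 2 * s), sq_nonneg (r - s)]
        _ ≤ ENNReal.ofReal (1 / (2 * ε) * (r - s) ^ 2) + F₁ s := le_self_add
  -- finiteness
  have hfin : F₁ε ε r ≠ ⊤ := by
    have hle : F₁ε ε r ≤ ENNReal.ofReal (1 / (2 * ε) * (r - r₀) ^ 2) + F₁ r₀ := by
      rw [hF₁ε]; exact iInf_le _ r₀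
    exact ne_top_of_le_ne_top (ENNReal.add_ne_top.mpr ⟨ENNReal.ofReal_ne_top, hr₀⟩) hle
  have hreal : M * r ^ 2 / 2 - M * R ^ 2 ≤ (F₁ε ε r).toReal :=
    (ENNReal.ofReal_le_iff_le_toReal hfin).mp key
  -- lower bound for F₂
  have hF2 := (abs_le.mp (taylor_bound_aux F₂ hF₂ L hLip r)).1
  -- conclude
  have : r ^ 2 - (M * R ^ 2 + |F₂ 0| + d ^ 2 / 4)
      ≤ (M * r ^ 2 / 2 - M * R ^ 2) + (F₂ 0 + d * r - Lr * r ^ 2) := by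
    nlinarith [sq_nonneg (r + d / 2), neg_abs_le (F₂ 0)]
  linarith
end

section
/- Let (X, μ) be a finite measure space, let u : X → ℝ be measurable, and let C > 0 be such that for every real r ∈ [2,∞): ∫_X |u|^r dμ ≤ (C·√r)^r. Then for every λ ∈ [1,2) and every c > 0 the function exp(c·|u|^λ) is integrable: ∫_X exp(c·|u|^λ) dμ < ∞. -/
open MeasureTheory
open scoped Nat

/-- Young-type bound: for `1 ≤ lam < 2`, `c > 0`, `ε > 0`, there is `K` with
`c * t ^ lam ≤ ε * t ^ 2 + K` for all `t ≥ 0`. -/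
lemma aux_young (lam : ℝ) (hlam1 : 1 ≤ lam) (hlam2 : lam < 2) (c ε : ℝ)
    (hc : 0 < c) (hε : 0 < ε) :
    ∃ K : ℝ, ∀ t : ℝ, 0 ≤ t → c * t ^ lam ≤ ε * t ^ 2 + K := by
  have h2l : 0 < 2 - lam := by linarith
  set T : ℝ := (c / ε) ^ (1 / (2 - lam)) with hT
  have hTpos : 0 < T := Real.rpow_pos_of_pos (div_pos hc hε) _
  refine ⟨c * T ^ lam, fun t ht => ?_⟩
  rcases le_total t T with h | h
  · have h1 : t ^ lam ≤ T ^ lam := Real.rpow_le_rpow ht h (by linarith)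
    nlinarith [sq_nonneg t, mul_le_mul_of_nonneg_left h1 hc.le]
  · have htpos : 0 < t := lt_of_lt_of_le hTpos h
    have hT2l : T ^ (2 - lam) = c / ε := by
      rw [hT, ← Real.rpow_mul (div_pos hc hε).le, one_div,
        inv_mul_cancel₀ h2l.ne', Real.rpow_one]
    have h1 : c / ε ≤ t ^ (2 - lam) := hT2l ▸ Real.rpow_le_rpow hTpos.le h h2l.le
    have h2 : (t : ℝ) ^ (2:ℕ) = t ^ (2 - lam) * t ^ lam := by
      rw [← Real.rpow_add htpos, sub_add_cancel, ← Real.rpow_natCast t 2]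
      norm_num
    have h3 : 0 < t ^ lam := Real.rpow_pos_of_pos htpos _
    have h4 : c ≤ t ^ (2 - lam) * ε := (div_le_iff₀ hε).mp h1
    have h5 : c * t ^ lam ≤ ε * t ^ 2 := by
      calc c * t ^ lam ≤ (t ^ (2 - lam) * ε) * t ^ lam :=
            mul_le_mul_of_nonneg_right h4 h3.le
        _ = ε * t ^ 2 := by rw [h2]; ring
    have h6 : 0 ≤ c * T ^ lam := mul_nonneg hc.le (Real.rpow_pos_of_pos hTpos _).le
    linarith

/-- Let `(X, μ)` be a finite measure space, `u : X → ℝ`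
measurable, and `C > 0` such that `∫ |u|^r dμ ≤ (C·√r)^r` for every real
`r ∈ [2,∞)`. Then for every `λ ∈ [1,2)` and every `c > 0` the function
`exp(c·|u|^λ)` is integrable. -/
theorem exp_integrable_of_moment_growth
    {X : Type*} [MeasurableSpace X] (μ : Measure X) [IsFiniteMeasure μ]
    (u : X → ℝ) (hu : Measurable u)
    (C : ℝ) (hC : 0 < C)
    (hmom : ∀ r : ℝ, 2 ≤ r →
      ∫⁻ x, ENNReal.ofReal (|u x| ^ r) ∂μ ≤ ENNReal.ofReal ((C * Real.sqrt r) ^ r)) :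
    ∀ lam : ℝ, 1 ≤ lam → lam < 2 → ∀ c : ℝ, 0 < c →
      Integrable (fun x => Real.exp (c * |u x| ^ lam)) μ := by
  intro lam hlam1 hlam2 c hc
  obtain ⟨ε, hεpos, hq⟩ : ∃ ε : ℝ, 0 < ε ∧ ε * C ^ 2 * 2 * Real.exp 1 = 1 / 2 :=
    ⟨1 / (4 * Real.exp 1 * C ^ 2), by positivity, by field_simp; ring⟩
  obtain ⟨K, hK⟩ := aux_young lam hlam1 hlam2 c ε hc hεpos
  -- Integrability of `exp (ε u²)`
  have hmeas2 : Measurable fun x => Real.exp (ε * u x ^ 2) :=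
    Real.measurable_exp.comp (measurable_const.mul (hu.pow_const 2))
  have hB : Integrable (fun x => Real.exp (ε * u x ^ 2)) μ := by
    refine ⟨hmeas2.aestronglyMeasurable, ?_⟩
    rw [hasFiniteIntegral_iff_ofReal
      (Filter.Eventually.of_forall fun x => (Real.exp_pos _).le)]
    have hnn : ∀ (x : X) (n : ℕ), 0 ≤ (ε * u x ^ 2) ^ n / n ! := by
      intro x n; positivity
    have hexp : ∀ x : X, ENNReal.ofReal (Real.exp (ε * u x ^ 2))
        = ∑' n : ℕ, ENNReal.ofReal ((ε * u x ^ 2) ^ n / n !) := by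
      intro x
      rw [Real.exp_eq_exp_ℝ, NormedSpace.exp_eq_tsum_div]
      exact ENNReal.ofReal_tsum_of_nonneg (hnn x) (Real.summable_pow_div_factorial _)
    have hterm_meas : ∀ n : ℕ,
        Measurable fun x => ENNReal.ofReal ((ε * u x ^ 2) ^ n / n !) :=
      fun n => ENNReal.measurable_ofReal.comp
        (((measurable_const.mul (hu.pow_const 2)).pow_const n).div_const _)
    have hterm : ∀ n : ℕ,
        ∫⁻ x, ENNReal.ofReal ((ε * u x ^ 2) ^ n / n !) ∂μ
          ≤ (μ Set.univ + 1) * (ENNReal.ofReal (1 / 2)) ^ n := by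
      intro n
      rcases n with _ | m
      · simp only [pow_zero, Nat.factorial_zero, Nat.cast_one, div_one, pow_zero,
          ENNReal.ofReal_one, lintegral_one, mul_one]
        exact le_add_right le_rfl
      · set n : ℕ := m + 1 with hn
        have hn1 : (1 : ℕ) ≤ n := Nat.succ_le_succ (Nat.zero_le m)
        have hr2 : (2 : ℝ) ≤ 2 * (n : ℝ) := by
          have : (1 : ℝ) ≤ (n : ℝ) := by exact_mod_cast hn1
          linarith
        have hfac : (0 : ℝ) < (n ! : ℝ) := by positivity
        -- pointwise rewriting
        have hpw : ∀ x : X, (ε * u x ^ 2) ^ n / n !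
            = ε ^ n / n ! * (u x ^ 2) ^ n := by
          intro x; rw [mul_pow]; ring
        have hpw2 : ∀ x : X, (u x ^ 2 : ℝ) ^ n = |u x| ^ (2 * (n : ℝ)) := by
          intro x
          rw [show (2 * (n : ℝ)) = ((2 * n : ℕ) : ℝ) by push_cast; ring,
            Real.rpow_natCast, pow_mul, sq_abs]
        have step1 : ∫⁻ x, ENNReal.ofReal ((ε * u x ^ 2) ^ n / n !) ∂μ
            = ENNReal.ofReal (ε ^ n / n !)
              * ∫⁻ x, ENNReal.ofReal (|u x| ^ (2 * (n : ℝ))) ∂μ := by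
          have : ∫⁻ x, ENNReal.ofReal ((ε * u x ^ 2) ^ n / n !) ∂μ
              = ∫⁻ x, ENNReal.ofReal (ε ^ n / n !)
                  * ENNReal.ofReal ((u x ^ 2) ^ n) ∂μ := by
            congr 1; ext x
            rw [hpw x, ENNReal.ofReal_mul (by positivity)]
          rw [this, lintegral_const_mul _
            (((hu.pow_const 2).pow_const n).ennreal_ofReal)]
          congr 1
          congr 1; ext x
          rw [hpw2 x]
        -- the numeric bound
        have key : ε ^ n / n ! * (C * Real.sqrt (2 * (n : ℝ))) ^ (2 * (n : ℝ))
            ≤ (1 / 2 : ℝ) ^ n := by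
          have h1 : (C * Real.sqrt (2 * (n : ℝ))) ^ (2 * (n : ℝ))
              = (C ^ 2 * (2 * (n : ℝ))) ^ n := by
            rw [show (2 * (n : ℝ)) = ((2 * n : ℕ) : ℝ) by push_cast; ring,
              Real.rpow_natCast, pow_mul, mul_pow,
              Real.sq_sqrt (by positivity : (0:ℝ) ≤ ((2 * n : ℕ) : ℝ))]
          rw [h1]
          have h2 : (n : ℝ) ^ n / n ! ≤ Real.exp 1 ^ n := by
            calc (n : ℝ) ^ n / n ! ≤ Real.exp (n : ℝ) :=
                  Real.pow_div_factorial_le_exp (x := (n : ℝ)) (Nat.cast_nonneg n) n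
              _ = Real.exp 1 ^ n := by rw [← Real.exp_nat_mul, mul_one]
          have h3 : ε ^ n / n ! * (C ^ 2 * (2 * (n : ℝ))) ^ n
              = (ε * C ^ 2 * 2) ^ n * ((n : ℝ) ^ n / n !) := by
            rw [show C ^ 2 * (2 * (n : ℝ)) = C ^ 2 * 2 * (n : ℝ) from by ring, mul_pow,
              show ε * C ^ 2 * 2 = ε * (C ^ 2 * 2) from by ring, mul_pow]
            ring
          rw [h3]
          calc (ε * C ^ 2 * 2) ^ n * ((n : ℝ) ^ n / n !)
              ≤ (ε * C ^ 2 * 2) ^ n * Real.exp 1 ^ n :=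
                mul_le_mul_of_nonneg_left h2 (by positivity)
            _ = (ε * C ^ 2 * 2 * Real.exp 1) ^ n := by rw [← mul_pow]
            _ = (1 / 2 : ℝ) ^ n := by rw [hq]
        calc ∫⁻ x, ENNReal.ofReal ((ε * u x ^ 2) ^ n / n !) ∂μ
            = ENNReal.ofReal (ε ^ n / n !)
              * ∫⁻ x, ENNReal.ofReal (|u x| ^ (2 * (n : ℝ))) ∂μ := step1
          _ ≤ ENNReal.ofReal (ε ^ n / n !)
              * ENNReal.ofReal ((C * Real.sqrt (2 * (n : ℝ))) ^ (2 * (n : ℝ))) :=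
                mul_le_mul_right (hmom _ hr2) _
          _ = ENNReal.ofReal (ε ^ n / n !
              * (C * Real.sqrt (2 * (n : ℝ))) ^ (2 * (n : ℝ))) := by
                rw [← ENNReal.ofReal_mul (by positivity)]
          _ ≤ ENNReal.ofReal ((1 / 2 : ℝ) ^ n) := ENNReal.ofReal_le_ofReal key
          _ = (ENNReal.ofReal (1 / 2)) ^ n := by
                rw [ENNReal.ofReal_pow (by norm_num)]
          _ ≤ (μ Set.univ + 1) * (ENNReal.ofReal (1 / 2)) ^ n := by
                conv_lhs => rw [← one_mul ((ENNReal.ofReal (1 / 2)) ^ n)]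
                exact mul_le_mul_left (le_add_self) _
    calc ∫⁻ x, ENNReal.ofReal (Real.exp (ε * u x ^ 2)) ∂μ
        = ∑' n : ℕ, ∫⁻ x, ENNReal.ofReal ((ε * u x ^ 2) ^ n / n !) ∂μ := by
          simp_rw [hexp]
          exact lintegral_tsum fun n => (hterm_meas n).aemeasurable
      _ ≤ ∑' n : ℕ, (μ Set.univ + 1) * (ENNReal.ofReal (1 / 2)) ^ n :=
          ENNReal.tsum_le_tsum hterm
      _ = (μ Set.univ + 1) * ∑' n : ℕ, (ENNReal.ofReal (1 / 2)) ^ n :=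
          ENNReal.tsum_mul_left
      _ < ⊤ := by
          rw [ENNReal.tsum_geometric]
          apply ENNReal.mul_lt_top
          · exact (ENNReal.add_lt_top.mpr ⟨measure_lt_top μ _, ENNReal.one_lt_top⟩)
          · rw [ENNReal.inv_lt_top]
            rw [pos_iff_ne_zero]
            intro h
            have := tsub_eq_zero_iff_le.mp h
            exact absurd this (not_le.2 (ENNReal.ofReal_lt_one.mpr (by norm_num)))
  -- conclude by domination
  have hf_meas : Measurable fun x => Real.exp (c * |u x| ^ lam) :=
    Real.measurable_exp.comp (measurable_const.mul
      ((Real.continuous_rpow_const (le_trans zero_le_one hlam1)).measurable.comp hu.abs))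
  refine (hB.const_mul (Real.exp K)).mono' hf_meas.aestronglyMeasurable ?_
  filter_upwards with x
  rw [Real.norm_eq_abs, abs_of_pos (Real.exp_pos _)]
  have h := hK |u x| (abs_nonneg _)
  rw [sq_abs] at h
  calc Real.exp (c * |u x| ^ lam) ≤ Real.exp (ε * u x ^ 2 + K) :=
        Real.exp_le_exp.2 h
    _ = Real.exp K * Real.exp (ε * u x ^ 2) := by
        rw [Real.exp_add, mul_comm]
end
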